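/- For all integers k ≥ 2, l ≥ 1 and every integer s, conjugating the element ẽ⁽ˡ⁾ₖ * τₖ ∈ ℚ[Sₖ] by τₖˢ leaves it fixed: τₖˢ · (Σ_{σ∈Sₖ} aₖ^{l, des(σ)+1}·στₖσ⁻¹) · τₖ⁻ˢ = Σ_{σ∈Sₖ} aₖ^{l, des(σ)+1}·στₖσ⁻¹. -/

import Mathlib

noncomputable section

/-- Number of descents of a permutation of `Fin n`. -/
def descents {n : ℕ} (σ : Equiv.Perm (Fin n)) : ℕ :=
  (Finset.univ.filter fun p : Fin n × Fin n =>
    (p.2 : ℕ) = (p.1 : ℕ) + 1 ∧ σ p.2 < σ p.1).card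

/-- `aCoeff n l j` is the coefficient of `X^l` in `(1/n!) ∏_{i=1}^n (X - j + i) ∈ ℚ[X]`. -/
def aCoeff (n l j : ℕ) : ℚ :=
  (((n.factorial : ℚ))⁻¹ • ∏ i ∈ Finset.Icc 1 n,
    (Polynomial.X + Polynomial.C ((i : ℚ) - (j : ℚ)))).coeff l

/-- The `k`-cycle `τₖ` sending `1 ↦ k` and `i ↦ i-1` for `2 ≤ i ≤ k`. -/
def tau (k : ℕ) : Equiv.Perm (Fin k) := (finRotate k)⁻¹

/-!
Write `E = ∑ σ, c σ • σ τ σ⁻¹` with `c σ = a(des σ + 1)`. Conjugating `E` by `τ` replaces `c` by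
`c (τ⁻¹ * ·)`. Since `σ τ^m` conjugates `τ` to the same element as `σ`, the multiple `k • E` only
depends on the orbit sums `∑_{m < k} c (σ τ^m)`, so it suffices that these are invariant under
`σ ↦ τ⁻¹ σ`. The descent set of each rotation `σ τ^m` is the cyclic descent set `D` of `σ` with
one position removed, so the orbit sum is `#D • a(#D) + (k - #D) • a(#D + 1)`. Finally, shifting
all values cyclically (`σ ↦ τ σ`) only moves one cyclic descent, from `σ⁻¹ 0 - 1` to `σ⁻¹ 0`,
so it preserves `#D`.
-/

open Finset Equiv MonoidAlgebra
open Fin.NatCast Fin.CommRing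

theorem Finset.sum_comp_card_erase {α M : Type*} [Fintype α] [DecidableEq α] [AddCommMonoid M]
    (s : Finset α) (f : ℕ → M) :
    ∑ a, f #(s.erase a) = #s • f (#s - 1) + (Fintype.card α - #s) • f #s := by
  have hs : ∑ a ∈ s, f #(s.erase a) = #s • f (#s - 1) := by
    rw [sum_congr rfl fun a ha => congrArg f (card_erase_of_mem ha), sum_const]
  have hsc : ∑ a ∈ sᶜ, f #(s.erase a) = (Fintype.card α - #s) • f #s := by
    rw [sum_congr rfl fun a ha => congrArg f (congrArg card (erase_eq_of_notMem (mem_compl.1 ha))),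
      sum_const, card_compl]
  rw [← sum_add_sum_compl s, hs, hsc]

section FinLemmas

variable {n : ℕ}

theorem Fin.val_eq_val_add_one_iff {i j : Fin (n + 1)} :
    (j : ℕ) = i + 1 ↔ i ≠ Fin.last n ∧ j = i + 1 := by
  constructor
  · intro h
    have hi : i ≠ Fin.last n := by
      rintro rfl
      simp only [Fin.val_last] at h
      omega
    exact ⟨hi, Fin.ext (by rw [h, Fin.val_add_one_of_lt (Fin.lt_last_iff_ne_last.2 hi)])⟩
  · rintro ⟨hi, rfl⟩
    exact Fin.val_add_one_of_lt (Fin.lt_last_iff_ne_last.2 hi)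

theorem Fin.neg_one_eq_last : (-1 : Fin (n + 1)) = Fin.last n :=
  neg_eq_of_add_eq_zero_left (Fin.last_add_one n)

theorem Fin.sub_one_eq_last_iff {x : Fin (n + 1)} : x - 1 = Fin.last n ↔ x = 0 := by
  rw [sub_eq_iff_eq_add, Fin.last_add_one]

theorem Fin.sub_one_lt_sub_one_iff {x y : Fin (n + 1)} (hx : x ≠ 0) (hy : y ≠ 0) :
    x - 1 < y - 1 ↔ x < y := by
  rw [Fin.lt_def, Fin.lt_def, Fin.val_sub_one_of_ne_zero hx, Fin.val_sub_one_of_ne_zero hy]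
  have := Fin.pos_iff_ne_zero.2 hx
  have := Fin.pos_iff_ne_zero.2 hy
  omega

end FinLemmas

section Conjugation

variable {R G : Type*} [Semiring R] [Group G]

theorem single_zpow_mul_mul_single_zpow_neg {g : G} {x : MonoidAlgebra R G}
    (h : Commute (single g 1) x) (s : ℤ) :
    single (g ^ s) (1 : R) * x * single (g ^ (-s)) 1 = x := by
  have hs : Commute (single (g ^ s) (1 : R)) x := by
    simpa [← map_zpow, MonoidHom.coe_toHomUnits, of_apply] using
      (h.symm.units_zpow_right (u := (of R G).toHomUnits g) s).symm
  rw [hs.eq, mul_assoc, single_mul_single, ← zpow_add, add_neg_cancel, zpow_zero, one_mul,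
    ← MonoidAlgebra.one_def, mul_one]

variable [Fintype G]

/-- The element `(∑ σ, c σ • σ) * t` of `R[G]`, where `*` is the conjugation action. -/
def conjSum (c : G → R) (t : G) : MonoidAlgebra R G :=
  ∑ σ, single (σ * t * σ⁻¹) (c σ)

theorem single_mul_conjSum_mul_single (c : G → R) (t g : G) :
    single g 1 * conjSum c t * single g⁻¹ 1 = conjSum (fun σ => c (g⁻¹ * σ)) t := by
  simp only [conjSum, Finset.mul_sum, Finset.sum_mul, single_mul_single, one_mul, mul_one]
  refine Fintype.sum_equiv (Equiv.mulLeft g) _ _ fun σ => ?_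
  simp only [Equiv.coe_mulLeft, mul_inv_rev, inv_mul_cancel_left]
  congr 1
  group

theorem conjSum_comp_mul_pow (c : G → R) (t : G) (m : ℕ) :
    conjSum (fun σ => c (σ * t ^ m)) t = conjSum c t := by
  refine Fintype.sum_equiv (Equiv.mulRight (t ^ m)) _ _ fun σ => ?_
  simp only [Equiv.coe_mulRight, mul_inv_rev]
  congr 1
  group

theorem nsmul_conjSum (c : G → R) (t : G) (N : ℕ) :
    N • conjSum c t = conjSum (fun σ => ∑ m ∈ range N, c (σ * t ^ m)) t := by
  calc N • conjSum c t = ∑ m ∈ range N, conjSum (fun σ => c (σ * t ^ m)) t := by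
        simp only [conjSum_comp_mul_pow, sum_const, card_range]
    _ = _ := by
        simp only [conjSum, ← singleAddHom_apply, map_sum]
        exact sum_comm

theorem conjSum_eq_of_sum_pow_eq [IsAddTorsionFree R] {c₁ c₂ : G → R} {t : G} {N : ℕ}
    (hN : N ≠ 0) (h : ∀ σ, ∑ m ∈ range N, c₁ (σ * t ^ m) = ∑ m ∈ range N, c₂ (σ * t ^ m)) :
    conjSum c₁ t = conjSum c₂ t := by
  refine coeffAddEquiv.injective (IsAddTorsionFree.nsmul_right_injective hN ?_)
  simp only [← map_nsmul, nsmul_conjSum, h]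

theorem commute_single_conjSum [IsAddTorsionFree R] {c : G → R} {t g : G} {N : ℕ}
    (hN : N ≠ 0) (h : ∀ σ, ∑ m ∈ range N, c (g⁻¹ * σ * t ^ m) = ∑ m ∈ range N, c (σ * t ^ m)) :
    Commute (single g 1) (conjSum c t) := by
  have hfix : single g 1 * conjSum c t * single g⁻¹ 1 = conjSum c t := by
    rw [single_mul_conjSum_mul_single]
    exact conjSum_eq_of_sum_pow_eq hN fun σ => by simpa only [mul_assoc] using h σ
  calc single g 1 * conjSum c t
      = single g 1 * conjSum c t * single g⁻¹ 1 * single g 1 := by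
        rw [mul_assoc _ (single g⁻¹ 1), single_mul_single, inv_mul_cancel, one_mul,
          ← MonoidAlgebra.one_def, mul_one]
    _ = conjSum c t * single g 1 := by rw [hfix]

end Conjugation

section CyclicDescents

variable {n : ℕ}

theorem tau_apply (x : Fin (n + 1)) : tau (n + 1) x = x - 1 := by
  rw [tau, Perm.inv_eq_iff_eq, finRotate_apply, sub_add_cancel]

theorem tau_pow_apply (m : ℕ) (x : Fin (n + 1)) : (tau (n + 1) ^ m) x = x - m := by
  induction m with
  | zero => simp
  | succ m ih => rw [pow_succ', Perm.mul_apply, ih, tau_apply]; push_cast; ring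

/-- Addition in `Fin (n + 1)` wraps around, so `Fin.last n` is a cyclic descent iff
`σ 0 < σ (Fin.last n)`. -/
def cyclicDescents (σ : Perm (Fin (n + 1))) : Finset (Fin (n + 1)) :=
  {i | σ (i + 1) < σ i}

theorem cyclicDescents_mul_tau_pow (σ : Perm (Fin (n + 1))) (m : ℕ) :
    cyclicDescents (σ * tau (n + 1) ^ m) =
      (cyclicDescents σ).map (Equiv.addRight (m : Fin (n + 1))).toEmbedding := by
  ext i
  simp [cyclicDescents, tau_pow_apply, sub_eq_add_neg, add_right_comm]

theorem descents_eq_card_cyclicDescents_erase_last (σ : Perm (Fin (n + 1))) :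
    descents σ = #((cyclicDescents σ).erase (Fin.last n)) := by
  refine card_nbij' Prod.fst (fun i => (i, i + 1)) ?_ ?_ ?_ ?_ <;>
    simp +contextual [Set.MapsTo, Set.LeftInvOn, Set.RightInvOn, cyclicDescents,
      Fin.val_eq_val_add_one_iff]

theorem descents_mul_tau_pow (σ : Perm (Fin (n + 1))) (m : ℕ) :
    descents (σ * tau (n + 1) ^ m) = #((cyclicDescents σ).erase (Fin.last n - m)) := by
  have hlast : Fin.last n = (Equiv.addRight (m : Fin (n + 1))).toEmbedding (Fin.last n - m) := by
    simp
  rw [descents_eq_card_cyclicDescents_erase_last, cyclicDescents_mul_tau_pow]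
  nth_rw 1 [hlast]
  rw [← map_erase, card_map]

theorem sum_range_descents_mul_tau_pow {M : Type*} [AddCommMonoid M] (f : ℕ → M)
    (σ : Perm (Fin (n + 1))) :
    ∑ m ∈ range (n + 1), f (descents (σ * tau (n + 1) ^ m)) =
      #(cyclicDescents σ) • f (#(cyclicDescents σ) - 1) +
        (n + 1 - #(cyclicDescents σ)) • f #(cyclicDescents σ) := by
  simp only [descents_mul_tau_pow]
  have h := sum_comp_card_erase (cyclicDescents σ) f
  rw [Fintype.card_fin] at h
  rw [← h, ← Fin.sum_univ_eq_sum_range (fun m => f #((cyclicDescents σ).erase (Fin.last n - m)))]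
  refine Fintype.sum_equiv (Equiv.subLeft (Fin.last n)) _ _ fun m => ?_
  simp

theorem cyclicDescents_tau_mul (σ : Perm (Fin (n + 2))) :
    cyclicDescents (tau (n + 2) * σ) =
      (cyclicDescents σ).map (swap (σ⁻¹ 0 - 1) (σ⁻¹ 0)).toEmbedding := by
  set z := σ⁻¹ 0
  have hσ : ∀ i, σ i = 0 ↔ i = z := fun i => Perm.eq_inv_iff_eq.symm
  have hz : σ z = 0 := (hσ z).2 rfl
  ext i
  simp only [cyclicDescents, mem_map_equiv, symm_swap, mem_filter, mem_univ, true_and,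
    Perm.mul_apply, tau_apply]
  by_cases hiz : i = z
  · subst hiz
    simp [hz, Fin.neg_one_eq_last, Fin.lt_last_iff_ne_last, Fin.sub_one_eq_last_iff,
      Fin.pos_iff_ne_zero, hσ]
  by_cases hiz' : i = z - 1
  · subst hiz'
    simp [hz, Fin.neg_one_eq_last, Fin.le_last]
  · have hi1 : σ (i + 1) ≠ 0 := by
      rw [ne_eq, hσ]
      exact fun h => hiz' (eq_sub_of_add_eq h)
    rw [swap_apply_of_ne_of_ne hiz' hiz, Fin.sub_one_lt_sub_one_iff hi1 (by rwa [ne_eq, hσ])]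

theorem card_cyclicDescents_tau_mul (σ : Perm (Fin (n + 2))) :
    #(cyclicDescents (tau (n + 2) * σ)) = #(cyclicDescents σ) := by
  rw [cyclicDescents_tau_mul, card_map]

end CyclicDescents

theorem tau_pow_conj_eulerian_conj_tau_general (k l : ℕ) (hk : 2 ≤ k) (s : ℤ) :
    MonoidAlgebra.single (tau k ^ s) (1 : ℚ) *
        (∑ σ : Equiv.Perm (Fin k),
          MonoidAlgebra.single (σ * tau k * σ⁻¹) (aCoeff k l (descents σ + 1))) *
        MonoidAlgebra.single (tau k ^ (-s)) (1 : ℚ) =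
      ∑ σ : Equiv.Perm (Fin k),
        MonoidAlgebra.single (σ * tau k * σ⁻¹) (aCoeff k l (descents σ + 1)) := by
  obtain ⟨n, rfl⟩ : ∃ n, k = n + 2 := ⟨k - 2, by omega⟩
  refine single_zpow_mul_mul_single_zpow_neg
    (commute_single_conjSum (N := n + 2) (by omega) fun σ => ?_) s
  have hcard : #(cyclicDescents ((tau (n + 2))⁻¹ * σ)) = #(cyclicDescents σ) := by
    rw [← card_cyclicDescents_tau_mul, mul_inv_cancel_left]
  rw [sum_range_descents_mul_tau_pow (fun d => aCoeff (n + 2) l (d + 1)),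
    sum_range_descents_mul_tau_pow (fun d => aCoeff (n + 2) l (d + 1)), hcard]

/-- Conjugating `ẽ⁽ˡ⁾ₖ * τₖ ∈ ℚ[Sₖ]` by any power `τₖˢ` (`s ∈ ℤ`) leaves it fixed. -/
theorem tau_pow_conj_eulerian_conj_tau (k l : ℕ) (hk : 2 ≤ k) (hl : 1 ≤ l) (s : ℤ) :
    MonoidAlgebra.single (tau k ^ s) (1 : ℚ) *
        (∑ σ : Equiv.Perm (Fin k),
          MonoidAlgebra.single (σ * tau k * σ⁻¹) (aCoeff k l (descents σ + 1))) *
        MonoidAlgebra.single (tau k ^ (-s)) (1 : ℚ) =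
      ∑ σ : Equiv.Perm (Fin k),
        MonoidAlgebra.single (σ * tau k * σ⁻¹) (aCoeff k l (descents σ + 1)) :=
  tau_pow_conj_eulerian_conj_tau_general k l hk s
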